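/- For positive integers n, k, x with 2 ≤ x ≤ n−k−x, the eccentricity distance sum of B_k(x, n−k−x) equals 5x² + (11k−3n−3)x + 4n² + 2kn − 5n − 14k + 2. -/

import Mathlib

open Finset
open scoped Classical

/-- Wiener index: sum of distances over unordered pairs of vertices. -/
noncomputable def wiener {V : Type*} [Fintype V] (G : SimpleGraph V) : ℚ :=
  (1/2) * ∑ u : V, ∑ v : V, (G.dist u v : ℚ)

/-- Harary index: sum of reciprocal distances over unordered pairs of distinct vertices. -/
noncomputable def harary {V : Type*} [Fintype V] (G : SimpleGraph V) : ℚ :=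
  (1/2) * ∑ p ∈ Finset.univ.offDiag, (1 : ℚ) / (G.dist p.1 p.2 : ℚ)

/-- Hyper-Wiener index: (1/2) Σ_{unordered pairs} (d + d²). -/
noncomputable def hyperWiener {V : Type*} [Fintype V] (G : SimpleGraph V) : ℚ :=
  (1/4) * ∑ u : V, ∑ v : V, ((G.dist u v : ℚ) + (G.dist u v : ℚ)^2)

/-- Eccentricity of a vertex: maximum distance to any other vertex. -/
noncomputable def ecc {V : Type*} [Fintype V] (G : SimpleGraph V) (u : V) : ℕ :=
  Finset.univ.sup (fun v => G.dist u v)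

/-- Connective eccentricity index: Σ_u deg(u)/ε(u). -/
noncomputable def cei {V : Type*} [Fintype V] (G : SimpleGraph V) : ℚ :=
  ∑ u : V, (G.degree u : ℚ) / (ecc G u : ℚ)

/-- Eccentricity distance sum: Σ_u ε(u)·D(u). -/
noncomputable def eds {V : Type*} [Fintype V] (G : SimpleGraph V) : ℚ :=
  ∑ u : V, (ecc G u : ℚ) * ∑ v : V, (G.dist u v : ℚ)

/-- `Bgraph x y k w`: the bipartite graph obtained from the complete bipartite graph
`K_{x,y}` (parts `Fin x` and `Fin y`) by attaching `k` pendant vertices to the vertex `w`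
of the part of size `x`. With `y = n - k - x` this is the graph `B_k(x, n-k-x)`. -/
def Bgraph (x y k : ℕ) (w : Fin x) : SimpleGraph ((Fin x ⊕ Fin y) ⊕ Fin k) :=
  SimpleGraph.fromRel (fun p q =>
    (∃ i j, p = Sum.inl (Sum.inl i) ∧ q = Sum.inl (Sum.inr j)) ∨
    (∃ m, p = Sum.inr m ∧ q = Sum.inl (Sum.inl w)))

/-!
Distances in `B_k(x, y)` depend only on the parts containing the two vertices: a pendant vertex is
at distance 3 from every vertex of the `x`-part other than its attachment vertex `w`, and any other
two distinct non-adjacent vertices have a common neighbour (`w` or a vertex of the `y`-part), so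
they are at distance 2. Hence the eccentricity and the transmission `D` are constant on each of the
classes `{w}`, `X ∖ {w}`, `Y` and the pendant vertices, and `ξ^d` is a sum of four products.
-/

lemma Fintype.sum_ite_eq_const {α M : Type*} [Fintype α] [DecidableEq α] [AddCommGroup M]
    (a : α) (c d : M) : ∑ b, (if a = b then c else d) = Fintype.card α • d + (c - d) := by
  have h : ∀ b, (if a = b then c else d) = d + (if a = b then c - d else 0) := by
    intro b; split_ifs <;> simp
  simp only [h, Finset.sum_add_distrib, Finset.sum_const, Finset.card_univ, Finset.sum_ite_eq,
    Finset.mem_univ, if_true]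

lemma Fintype.sum_ite_eq_const' {α M : Type*} [Fintype α] [DecidableEq α] [AddCommGroup M]
    (a : α) (c d : M) : ∑ b, (if b = a then c else d) = Fintype.card α • d + (c - d) := by
  simp only [eq_comm (b := a), Fintype.sum_ite_eq_const]

namespace SimpleGraph

variable {V : Type*} {G : SimpleGraph V} {u v z : V}

lemma dist_eq_two_of_adj_of_adj (hne : u ≠ v) (hnadj : ¬G.Adj u v) (hu : G.Adj u z)
    (hv : G.Adj z v) : G.dist u v = 2 := by
  rw [dist, edist_eq_two_iff.mpr ⟨hne, hnadj, z, hu, hv.symm⟩]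
  rfl

lemma dist_eq_three_of_walk (p : G.Walk u v) (hp : p.length = 3) (hne : u ≠ v)
    (hnadj : ¬G.Adj u v) (hcn : ∀ z, G.Adj u z → ¬G.Adj z v) : G.dist u v = 3 := by
  have hlt : 2 < G.edist u v :=
    two_lt_edist_iff.mpr ⟨hne, hnadj, Set.eq_empty_of_forall_notMem fun z hz =>
      hcn z hz.1 (G.mem_commonNeighbors.mp hz).2.symm⟩
  have hle : G.edist u v ≤ 3 := by simpa [hp] using G.edist_le p
  rw [dist, le_antisymm hle (Order.add_one_le_of_lt hlt)]
  rfl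

end SimpleGraph

lemma ecc_eq_of_forall_dist_le {V : Type*} [Fintype V] {G : SimpleGraph V} {u : V} {c : ℕ}
    (v : V) (hv : G.dist u v = c) (h : ∀ v', G.dist u v' ≤ c) : ecc G u = c :=
  le_antisymm (Finset.sup_le fun v' _ => h v') (hv ▸ Finset.le_sup (Finset.mem_univ v))

namespace Bgraph

open SimpleGraph

variable {x y k : ℕ} {w : Fin x}

local notation "L" i => (Sum.inl (Sum.inl i) : (Fin _ ⊕ Fin _) ⊕ Fin _)
local notation "R" j => (Sum.inl (Sum.inr j) : (Fin _ ⊕ Fin _) ⊕ Fin _)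
local notation "P" m => (Sum.inr m : (Fin _ ⊕ Fin _) ⊕ Fin _)

lemma dist_left_right (i : Fin x) (j : Fin y) : (Bgraph x y k w).dist (L i) (R j) = 1 :=
  dist_eq_one_iff_adj.mpr (by simp [Bgraph])

lemma dist_left_left (j : Fin y) (i i' : Fin x) :
    (Bgraph x y k w).dist (L i) (L i') = if i = i' then 0 else 2 := by
  split_ifs with h
  · simp [h]
  · exact dist_eq_two_of_adj_of_adj (by simpa) (by simp [Bgraph])
      (by simp [Bgraph] : (Bgraph x y k w).Adj (L i) (R j)) (by simp [Bgraph])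

lemma dist_right_left (j : Fin y) (i : Fin x) : (Bgraph x y k w).dist (R j) (L i) = 1 := by
  rw [dist_comm, dist_left_right]

lemma dist_right_right (j j' : Fin y) :
    (Bgraph x y k w).dist (R j) (R j') = if j = j' then 0 else 2 := by
  split_ifs with h
  · simp [h]
  · exact dist_eq_two_of_adj_of_adj (by simpa) (by simp [Bgraph])
      (by simp [Bgraph] : (Bgraph x y k w).Adj (R j) (L w)) (by simp [Bgraph])

lemma dist_pendant_pendant (m m' : Fin k) :
    (Bgraph x y k w).dist (P m) (P m') = if m = m' then 0 else 2 := by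
  split_ifs with h
  · simp [h]
  · exact dist_eq_two_of_adj_of_adj (by simpa) (by simp [Bgraph])
      (by simp [Bgraph] : (Bgraph x y k w).Adj (P m) (L w)) (by simp [Bgraph])

lemma dist_right_pendant (j : Fin y) (m : Fin k) : (Bgraph x y k w).dist (R j) (P m) = 2 :=
  dist_eq_two_of_adj_of_adj (by simp) (by simp [Bgraph])
    (by simp [Bgraph] : (Bgraph x y k w).Adj (R j) (L w)) (by simp [Bgraph])

lemma dist_pendant_right (m : Fin k) (j : Fin y) : (Bgraph x y k w).dist (P m) (R j) = 2 := by
  rw [dist_comm, dist_right_pendant]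

lemma dist_left_pendant (j : Fin y) (i : Fin x) (m : Fin k) :
    (Bgraph x y k w).dist (L i) (P m) = if i = w then 1 else 3 := by
  split_ifs with h
  · exact dist_eq_one_iff_adj.mpr (by simp [Bgraph, h])
  · have hij : (Bgraph x y k w).Adj (L i) (R j) := by simp [Bgraph]
    have hjw : (Bgraph x y k w).Adj (R j) (L w) := by simp [Bgraph]
    have hwm : (Bgraph x y k w).Adj (L w) (P m) := by simp [Bgraph]
    refine dist_eq_three_of_walk (.cons hij (.cons hjw (.cons hwm .nil))) rfl (by simp)
      (by simp [Bgraph, h]) ?_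
    rintro ((i' | j') | m') <;> simp [Bgraph]

lemma dist_pendant_left (j : Fin y) (m : Fin k) (i : Fin x) :
    (Bgraph x y k w).dist (P m) (L i) = if i = w then 1 else 3 := by
  rw [dist_comm, dist_left_pendant j]

lemma ecc_left (j : Fin y) (m : Fin k) (hx : 1 < x) (i : Fin x) :
    ecc (Bgraph x y k w) (L i) = if i = w then 2 else 3 := by
  split_ifs with h
  · obtain ⟨i', hi'⟩ := Fintype.exists_ne_of_one_lt_card (by simpa) i
    refine ecc_eq_of_forall_dist_le (L i') (by simp [dist_left_left j, hi'.symm]) ?_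
    rintro ((i' | j') | m') <;> simp [dist_left_left j, dist_left_right, dist_left_pendant j, h]
    split_ifs <;> simp
  · refine ecc_eq_of_forall_dist_le (P m) (by simp [dist_left_pendant j, h]) ?_
    rintro ((i' | j') | m') <;> simp [dist_left_left j, dist_left_right, dist_left_pendant j, h]
    split_ifs <;> simp

lemma ecc_right (m : Fin k) (j : Fin y) : ecc (Bgraph x y k w) (R j) = 2 := by
  refine ecc_eq_of_forall_dist_le (P m) (dist_right_pendant j m) ?_
  rintro ((i' | j') | m') <;> simp [dist_right_left, dist_right_right, dist_right_pendant]
  split_ifs <;> simp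

lemma ecc_pendant (j : Fin y) {i : Fin x} (hi : i ≠ w) (m : Fin k) :
    ecc (Bgraph x y k w) (P m) = 3 := by
  refine ecc_eq_of_forall_dist_le (L i) (by simp [dist_pendant_left j, hi]) ?_
  rintro ((i' | j') | m') <;>
    simp [dist_pendant_left j, dist_pendant_right, dist_pendant_pendant]
  all_goals split_ifs <;> simp

lemma sum_dist_left (j : Fin y) (i : Fin x) :
    ∑ v, ((Bgraph x y k w).dist (L i) v : ℚ)
      = 2 * (x - 1) + y + (if i = w then 1 else 3) * k := by
  simp only [Fintype.sum_sum_type, dist_left_left j, dist_left_right, dist_left_pendant j,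
    apply_ite (Nat.cast : ℕ → ℚ), Fintype.sum_ite_eq_const, Finset.sum_const, Finset.card_univ,
    Fintype.card_fin, nsmul_eq_mul]
  split_ifs <;> push_cast <;> ring

lemma sum_dist_right (j : Fin y) :
    ∑ v, ((Bgraph x y k w).dist (R j) v : ℚ) = x + 2 * (y - 1) + 2 * k := by
  simp only [Fintype.sum_sum_type, dist_right_left, dist_right_right, dist_right_pendant,
    apply_ite (Nat.cast : ℕ → ℚ), Fintype.sum_ite_eq_const, Finset.sum_const, Finset.card_univ,
    Fintype.card_fin, nsmul_eq_mul]
  push_cast; ring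

lemma sum_dist_pendant (j : Fin y) (m : Fin k) :
    ∑ v, ((Bgraph x y k w).dist (P m) v : ℚ) = 3 * x - 2 + 2 * y + 2 * (k - 1) := by
  simp only [Fintype.sum_sum_type, dist_pendant_left j, dist_pendant_right, dist_pendant_pendant,
    apply_ite (Nat.cast : ℕ → ℚ), Fintype.sum_ite_eq_const, Fintype.sum_ite_eq_const',
    Finset.sum_const, Finset.card_univ, Fintype.card_fin, nsmul_eq_mul]
  push_cast; ring

theorem eds_eq (hx : 2 ≤ x) (hy : 1 ≤ y) (hk : 1 ≤ k) :
    eds (Bgraph x y k w)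
      = 2 * (2 * (x - 1) + y + k) + 3 * (x - 1) * (2 * (x - 1) + y + 3 * k)
        + 2 * y * (x + 2 * (y - 1) + 2 * k) + 3 * k * (3 * x - 2 + 2 * y + 2 * (k - 1)) := by
  obtain ⟨i, hi⟩ := Fintype.exists_ne_of_one_lt_card (by simpa) w
  let j : Fin y := ⟨0, hy⟩
  let m : Fin k := ⟨0, hk⟩
  have hleft : ∀ i' : Fin x, (ecc (Bgraph x y k w) (L i') : ℚ)
      * ∑ v, ((Bgraph x y k w).dist (L i') v : ℚ)
      = if i' = w then (2 : ℚ) * (2 * (x - 1) + y + k) else 3 * (2 * (x - 1) + y + 3 * k) := by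
    intro i'
    rw [ecc_left j m hx, sum_dist_left j]
    split_ifs <;> push_cast <;> ring
  rw [eds, Fintype.sum_sum_type, Fintype.sum_sum_type]
  simp only [hleft, ecc_right m, sum_dist_right, ecc_pendant j hi, sum_dist_pendant j,
    Fintype.sum_ite_eq_const', Finset.sum_const, Finset.card_univ, Fintype.card_fin, nsmul_eq_mul]
  push_cast
  ring

end Bgraph

/-- Eccentricity distance sum of `B_k(x, n-k-x)` (here `y = n - k - x`). -/
theorem eds_Bgraph (n k x y : ℕ) (hn : n = x + y + k) (hk : 1 ≤ k)
    (hx : 2 ≤ x) (hxy : x ≤ y) (w : Fin x) :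
    eds (Bgraph x y k w)
      = 5 * (x : ℚ)^2 + (11 * (k : ℚ) - 3 * n - 3) * x
          + 4 * (n : ℚ)^2 + 2 * k * n - 5 * n - 14 * k + 2 := by
  rw [Bgraph.eds_eq hx (by omega) hk, hn]
  push_cast
  ring
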